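/- For k \in (0, 1/4), define c(k) = (2\cos((2k+1)\pi/3))^{1/(2k)}. Then c is a strictly decreasing continuous function of k on (0,1/4), with c(k) \to \exp(-\pi/\sqrt{3}) as k \to 0^+ and c(k) \to 0 as k \to 1/4^-. -/

import Mathlib

/-! With `θ(k) = (2k+1)π/3` and `g = log (2 cos ·)`, which vanishes at `π/3`, one has
`log c(k) = (π/3) · (g θ - g (π/3)) / (θ - π/3)`. Since `g` is strictly concave on
`(-π/2, π/2)`, this secant slope decreases strictly in `θ`, and as `k → 0⁺` it tends to
`g'(π/3) = -tan (π/3) = -√3`. At `k = 1/4` the base `2 cos (π/2)` vanishes while the exponent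
is `2`, so `c` is continuous there with value `0`. -/

open Real Filter

noncomputable def cOf (k : ℝ) : ℝ := (2 * Real.cos ((2 * k + 1) * π / 3)) ^ (1 / (2 * k))

open Set Topology

theorem StrictConcaveOn.strictAntiOn_slope {𝕜 : Type*} [Field 𝕜] [LinearOrder 𝕜]
    [IsStrictOrderedRing 𝕜] {s : Set 𝕜} {f : 𝕜 → 𝕜} {a : 𝕜} (hf : StrictConcaveOn 𝕜 s f)
    (ha : a ∈ s) :
    StrictAntiOn (slope f a) (s \ {a}) := fun x hx y hy hxy => by
  simpa only [slope_def_field] using hf.secant_strict_mono ha hx.1 hy.1 hx.2 hy.2 hxy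

noncomputable def logTwoCos (θ : ℝ) : ℝ := log (2 * cos θ)

theorem strictConcaveOn_logTwoCos : StrictConcaveOn ℝ (Ioo (-(π / 2)) (π / 2)) logTwoCos := by
  have hcos := strictConcaveOn_cos_Icc.subset Ioo_subset_Icc_self (convex_Ioo _ _)
  have hpos : ∀ θ ∈ Ioo (-(π / 2)) (π / 2), 0 < 2 * cos θ := fun θ hθ => by
    have := cos_pos_of_mem_Ioo hθ; positivity
  refine ⟨convex_Ioo _ _, fun x hx y hy hxy a b ha hb hab => ?_⟩
  calc a • logTwoCos x + b • logTwoCos y ≤ log (a • (2 * cos x) + b • (2 * cos y)) :=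
        strictConcaveOn_log_Ioi.concaveOn.2 (hpos x hx) (hpos y hy) ha.le hb.le hab
    _ < logTwoCos (a • x + b • y) := by
        refine log_lt_log (add_pos (smul_pos ha (hpos x hx)) (smul_pos hb (hpos y hy))) ?_
        have := hcos.2 hx hy hxy ha hb hab
        simp only [smul_eq_mul] at this ⊢
        linarith

theorem hasDerivAt_logTwoCos {θ : ℝ} (h : cos θ ≠ 0) : HasDerivAt logTwoCos (-tan θ) θ := by
  have := ((hasDerivAt_cos θ).const_mul 2).log (mul_ne_zero two_ne_zero h)
  exact this.congr_deriv (by rw [tan_eq_sin_div_cos]; field_simp)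

theorem logTwoCos_pi_div_three : logTwoCos (π / 3) = 0 := by
  simp [logTwoCos, cos_pi_div_three]

theorem mapsTo_angle :
    MapsTo (fun k : ℝ => (2 * k + 1) * π / 3) (Ioo 0 (1 / 4)) (Ioo (π / 3) (π / 2)) :=
  fun _ ⟨h0, h1⟩ => ⟨by nlinarith [pi_pos], by nlinarith [pi_pos]⟩

theorem cOf_eq_exp_slope {k : ℝ} (hk : k ∈ Ioo 0 (1 / 4)) :
    cOf k = exp (π / 3 * slope logTwoCos (π / 3) ((2 * k + 1) * π / 3)) := by
  have hθ := mapsTo_angle hk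
  have hcos : 0 < cos ((2 * k + 1) * π / 3) :=
    cos_pos_of_mem_Ioo ⟨by linarith [pi_pos, hθ.1], hθ.2⟩
  have hk0 : k ≠ 0 := hk.1.ne'
  rw [cOf, rpow_def_of_pos (by positivity), slope_def_field, logTwoCos_pi_div_three, logTwoCos]
  congr 1
  field_simp
  ring

theorem strictAntiOn_cOf : StrictAntiOn cOf (Ioo 0 (1 / 4)) := by
  have hπ := pi_pos
  have hslope : StrictAntiOn (slope logTwoCos (π / 3)) (Ioo (π / 3) (π / 2)) :=
    (strictConcaveOn_logTwoCos.strictAntiOn_slope ⟨by linarith, by linarith⟩).mono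
      fun θ hθ => ⟨⟨by linarith [hθ.1], hθ.2⟩, hθ.1.ne'⟩
  intro x hx y hy hxy
  rw [cOf_eq_exp_slope hx, cOf_eq_exp_slope hy, exp_lt_exp]
  have := hslope (mapsTo_angle hx) (mapsTo_angle hy) (by dsimp only; gcongr)
  gcongr

theorem continuousAt_cOf {k : ℝ} (hk : 0 < k) : ContinuousAt cOf k :=
  ContinuousAt.rpow (by fun_prop) (continuousAt_const.div (by fun_prop) (by positivity))
    (Or.inr (by positivity))

theorem cOf_one_div_four : cOf (1 / 4) = 0 := by
  rw [cOf, show (2 * (1 / 4 : ℝ) + 1) * π / 3 = π / 2 by ring, cos_pi_div_two]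
  norm_num

theorem tendsto_cOf_nhdsGT_zero : Tendsto cOf (𝓝[>] 0) (𝓝 (exp (-π / √3))) := by
  have hangle : Tendsto (fun k : ℝ => (2 * k + 1) * π / 3) (𝓝[>] 0) (𝓝[≠] (π / 3)) := by
    refine tendsto_nhdsWithin_of_tendsto_nhds_of_eventually_within _ ?_ ?_
    · exact ((by fun_prop : Continuous fun k : ℝ => (2 * k + 1) * π / 3).tendsto' 0 _
        (by ring)).mono_left nhdsWithin_le_nhds
    · exact eventually_nhdsWithin_of_forall fun k (hk : 0 < k) =>
        ne_of_gt (by nlinarith [pi_pos])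
  have hderiv : HasDerivAt logTwoCos (-√3) (π / 3) := by
    rw [← tan_pi_div_three]
    exact hasDerivAt_logTwoCos (by rw [cos_pi_div_three]; norm_num)
  have hlim : π / 3 * -√3 = -π / √3 := by
    field_simp
    rw [sq_sqrt zero_le_three]
  have := ((hasDerivAt_iff_tendsto_slope.1 hderiv).comp hangle).const_mul (π / 3) |>.rexp
  rw [hlim] at this
  refine this.congr' ?_
  filter_upwards [Ioo_mem_nhdsGT (by norm_num : (0 : ℝ) < 1 / 4)] with k hk
  exact (cOf_eq_exp_slope hk).symm

theorem tendsto_cOf_nhdsLT_one_div_four : Tendsto cOf (𝓝[<] (1 / 4)) (𝓝 0) :=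
  cOf_one_div_four ▸ (continuousAt_cOf (by norm_num)).tendsto.mono_left nhdsWithin_le_nhds

theorem stmt_7 :
    StrictAntiOn cOf (Set.Ioo (0:ℝ) (1/4)) ∧
    ContinuousOn cOf (Set.Ioo (0:ℝ) (1/4)) ∧
    Tendsto cOf (nhdsWithin 0 (Set.Ioi (0:ℝ))) (nhds (Real.exp (-π / Real.sqrt 3))) ∧
    Tendsto cOf (nhdsWithin (1/4) (Set.Iio (1/4:ℝ))) (nhds 0) :=
  ⟨strictAntiOn_cOf, fun _ hk => (continuousAt_cOf hk.1).continuousWithinAt,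
    tendsto_cOf_nhdsGT_zero, tendsto_cOf_nhdsLT_one_div_four⟩
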